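/- For any vector r ∈ ℝ^{N−1} with entries r_2,…,r_N, the polynomial λ(τ) = ∑_{i=1}^N (A† r)_i L_i(τ) satisfies λ'(τ_i) = −r_i for every interior index i = 2,…,N−1. -/

import Mathlib

/-!
Two facts about Legendre–Gauss–Lobatto-type rules drive the proof. First, the product
`Lᵢ Lₖ'` has degree `2N - 3`, so the quadrature integrates it exactly; integrating
`(Lᵢ Lₖ)'` by parts and using that `Lₖ` vanishes at `±1` for an interior node `k` gives the
summation-by-parts identity `wₖ Lᵢ'(τₖ) = -wᵢ Lₖ'(τᵢ)`, i.e. `W D` is antisymmetric in the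
interior rows. Second, `A` integrates interpolants exactly, so `A (Lₖ'(τᵢ))ᵢ` is the vector of
increments `Lₖ(τⱼ) - Lₖ(-1) = δₖⱼ`. Writing `λ'(τₖ) = ⟨A† r, (Lᵢ'(τₖ))ᵢ⟩ = ⟨W r, A W⁻¹ (Lᵢ'(τₖ))ᵢ⟩`
and substituting the first identity into the second leaves `-rₖ`.
-/

open Polynomial

/-- `lagL τ i` is the `i`-th Lagrange basis polynomial (of degree `N - 1`)
for the nodes `τ 0, …, τ (N-1)`, satisfying `(lagL τ i).eval (τ j) = δᵢⱼ`. -/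
noncomputable def lagL {N : ℕ} (τ : Fin N → ℝ) (i : Fin N) : ℝ[X] :=
  Lagrange.basis Finset.univ τ i

/-- `lagLp τ` is the polynomial `L_p(x) = ∏ᵢ (x - τᵢ)`. -/
noncomputable def lagLp {N : ℕ} (τ : Fin N → ℝ) : ℝ[X] :=
  ∏ i, (X - C (τ i))

/-- The differentiation matrix `D`, with `D i j = L_j'(τ i)`. -/
noncomputable def matD {N : ℕ} (τ : Fin N → ℝ) : Matrix (Fin N) (Fin N) ℝ :=
  fun i j => (derivative (lagL τ j)).eval (τ i)

/-- The vector `D_p`, with `(D_p) i = L_p'(τ i)`. -/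
noncomputable def vecDp {N : ℕ} (τ : Fin N → ℝ) : Fin N → ℝ :=
  fun i => (derivative (lagLp τ)).eval (τ i)

/-- Columns `2, …, N+1` (in 1-based numbering) of the augmented differentiation
matrix `D̃ = [D  D_p]`: column `j` (0-based, `j < N - 1`) is column `j + 1` of `D`,
and the last column is `D_p`. -/
noncomputable def matDtil2 {N : ℕ} (τ : Fin N → ℝ) : Matrix (Fin N) (Fin N) ℝ :=
  fun i j => if h : (j : ℕ) + 1 < N then matD τ i ⟨(j : ℕ) + 1, h⟩ else vecDp τ i

/-- The quadrature rule with nodes `τ` and weights `w` integrates exactly all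
polynomials of degree at most `2 * N - 3` over `[-1, 1]`. -/
def IsQuadrature {N : ℕ} (τ : Fin N → ℝ) (w : Fin N → ℝ) : Prop :=
  ∀ p : ℝ[X], p.natDegree ≤ 2 * N - 3 →
    ∑ i, w i * p.eval (τ i) = ∫ t in (-1 : ℝ)..1, p.eval t

/-- The integration matrix `A` with rows indexed (0-based) by `i : Fin (N-1)`
corresponding to the node `τ (i+1)`: `A i j = ∫_{-1}^{τ (i+1)} L_j(t) dt`. -/
noncomputable def matA {N : ℕ} (τ : Fin N → ℝ) : Matrix (Fin (N - 1)) (Fin N) ℝ :=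
  fun i j => ∫ t in (-1 : ℝ)..(τ ⟨(i : ℕ) + 1, by have := i.isLt; omega⟩), (lagL τ j).eval t

/-- The row vector `A_p`, with `(A_p) j = (1/N) ∏_{k ≠ j} 1 / (τ j - τ k)`. -/
noncomputable def rowAp {N : ℕ} (τ : Fin N → ℝ) : Fin N → ℝ :=
  fun j => (1 / (N : ℝ)) * ∏ k ∈ Finset.univ.erase j, (τ j - τ k)⁻¹

/-- The matrix `Ã` obtained by stacking `A` on top of the row vector `A_p`. -/
noncomputable def matAtil {N : ℕ} (τ : Fin N → ℝ) : Matrix (Fin N) (Fin N) ℝ :=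
  fun i j => if h : (i : ℕ) + 1 < N then matA τ ⟨(i : ℕ), by omega⟩ j else rowAp τ j

/-- The adjoint integration matrix `A† = W⁻¹ Aᵀ W_{2:N}`, with columns indexed
(0-based) by `j : Fin (N-1)` corresponding to the node `τ (j+1)`. -/
noncomputable def matAdag {N : ℕ} (τ : Fin N → ℝ) (w : Fin N → ℝ) :
    Matrix (Fin N) (Fin (N - 1)) ℝ :=
  fun i j => (w i)⁻¹ * matA τ j i * w ⟨(j : ℕ) + 1, by have := j.isLt; omega⟩

/-- `polyM τ k` is the Lagrange basis polynomial (of degree `N - 3`) for the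
interior nodes `τ 1, …, τ (N-2)`, satisfying `(polyM τ k).eval (τ m) = δₖₘ`
for interior indices `m`. -/
noncomputable def polyM {N : ℕ} (τ : Fin N → ℝ) (k : Fin N) : ℝ[X] :=
  Lagrange.basis (Finset.univ.filter fun m : Fin N => 0 < (m : ℕ) ∧ (m : ℕ) < N - 1) τ k

/-- The polynomial `λ(x) = ∑ᵢ (A† r)ᵢ Lᵢ(x)`. -/
noncomputable def lamP {N : ℕ} (τ : Fin N → ℝ) (w : Fin N → ℝ) (r : Fin (N - 1) → ℝ) : ℝ[X] :=
  ∑ i, C ((matAdag τ w).mulVec r i) * lagL τ i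

open Matrix

theorem Polynomial.integral_eval_derivative (p : ℝ[X]) (a b : ℝ) :
    ∫ t in a..b, p.derivative.eval t = p.eval b - p.eval a :=
  intervalIntegral.integral_eq_sub_of_hasDerivAt (fun x _ => p.hasDerivAt x)
    (p.derivative.continuous.intervalIntegrable a b)

section LagrangeBasis

variable {N : ℕ} {τ : Fin N → ℝ}

theorem lagL_eval (hτ : Function.Injective τ) (i j : Fin N) :
    (lagL τ i).eval (τ j) = if i = j then 1 else 0 := by
  split_ifs with h
  · subst h
    exact Lagrange.eval_basis_self hτ.injOn (Finset.mem_univ i)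
  · exact Lagrange.eval_basis_of_ne h (Finset.mem_univ j)

theorem natDegree_lagL (hτ : Function.Injective τ) (i : Fin N) :
    (lagL τ i).natDegree = N - 1 := by
  rw [lagL, Lagrange.natDegree_basis hτ.injOn (Finset.mem_univ i), Finset.card_univ,
    Fintype.card_fin]

theorem integral_eval_eq_sum_mul_integral_lagL (hτ : Function.Injective τ) {p : ℝ[X]}
    (hp : p.natDegree < N) (a b : ℝ) :
    ∫ t in a..b, p.eval t = ∑ i, p.eval (τ i) * ∫ t in a..b, (lagL τ i).eval t := by
  have hdeg : p.degree < (Finset.univ : Finset (Fin N)).card := by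
    rw [Finset.card_univ, Fintype.card_fin]
    exact (degree_le_natDegree).trans_lt (by exact_mod_cast hp)
  conv_lhs => rw [Lagrange.eq_interpolate hτ.injOn hdeg, Lagrange.interpolate_apply]
  simp_rw [eval_finsetSum, eval_mul, eval_C]
  rw [intervalIntegral.integral_finsetSum fun i _ =>
    ((Lagrange.basis _ τ i).continuous.const_mul _).intervalIntegrable a b]
  simp_rw [intervalIntegral.integral_const_mul, lagL]

theorem sum_mul_eval_lagL_mul (hτ : Function.Injective τ) (w : Fin N → ℝ) (j : Fin N)
    (q : ℝ[X]) : ∑ i, w i * (lagL τ j * q).eval (τ i) = w j * q.eval (τ j) := by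
  simp [eval_mul, lagL_eval hτ]

end LagrangeBasis

theorem IsQuadrature.mul_eval_derivative_lagL_antisymm {N : ℕ} {τ w : Fin N → ℝ}
    (hquad : IsQuadrature τ w) (hτ : Function.Injective τ) {i₀ i₁ k : Fin N}
    (h0 : τ i₀ = -1) (h1 : τ i₁ = 1) (hk₀ : k ≠ i₀) (hk₁ : k ≠ i₁) (j : Fin N) :
    w k * (lagL τ j).derivative.eval (τ k) = -(w j * (lagL τ k).derivative.eval (τ j)) := by
  have hdeg : ∀ i i' : Fin N, (lagL τ i * (lagL τ i').derivative).natDegree ≤ 2 * N - 3 := by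
    intro i i'
    have := natDegree_derivative_le (lagL τ i')
    rw [natDegree_lagL hτ] at this
    have := natDegree_mul_le (p := lagL τ i) (q := (lagL τ i').derivative)
    rw [natDegree_lagL hτ] at this
    omega
  have hjk := hquad _ (hdeg j k)
  have hkj := hquad _ (hdeg k j)
  rw [sum_mul_eval_lagL_mul hτ] at hjk hkj
  have hparts : ∫ t in (-1 : ℝ)..1,
      (lagL τ k * (lagL τ j).derivative + lagL τ j * (lagL τ k).derivative).eval t = 0 := by
    rw [show lagL τ k * (lagL τ j).derivative + lagL τ j * (lagL τ k).derivative
        = (lagL τ j * lagL τ k).derivative by rw [derivative_mul]; ring,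
      integral_eval_derivative, eval_mul, eval_mul, ← h0, ← h1, lagL_eval hτ k,
      lagL_eval hτ k, if_neg hk₀, if_neg hk₁]
    ring
  simp only [eval_add] at hparts
  rw [intervalIntegral.integral_add ((Polynomial.continuous _).intervalIntegrable _ _)
    ((Polynomial.continuous _).intervalIntegrable _ _)] at hparts
  linarith

theorem matA_mulVec_eval_derivative {N : ℕ} {τ : Fin N → ℝ} (hτ : Function.Injective τ)
    {p : ℝ[X]} (hp : p.natDegree ≤ N) (j : Fin (N - 1)) :
    (matA τ *ᵥ fun i => p.derivative.eval (τ i)) j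
      = p.eval (τ ⟨j + 1, by omega⟩) - p.eval (-1) := by
  have hdeg : p.derivative.natDegree < N := by
    have := natDegree_derivative_le p
    have := j.isLt
    omega
  rw [← integral_eval_derivative, integral_eval_eq_sum_mul_integral_lagL hτ hdeg]
  simp only [Matrix.mulVec, dotProduct, matA, mul_comm]

theorem matAdag_mulVec_dotProduct {N : ℕ} (τ w : Fin N → ℝ) (r : Fin (N - 1) → ℝ)
    (d : Fin N → ℝ) :
    matAdag τ w *ᵥ r ⬝ᵥ d
      = ∑ j, r j * w ⟨j + 1, by omega⟩ * (matA τ *ᵥ fun i => (w i)⁻¹ * d i) j := by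
  simp only [Matrix.mulVec, dotProduct, matAdag, Finset.sum_mul, Finset.mul_sum]
  rw [Finset.sum_comm]
  exact Finset.sum_congr rfl fun j _ => Finset.sum_congr rfl fun i _ => by ring

/-- At each interior node (paper indices `i = 2, …, N-1`), `λ'(τᵢ) = -rᵢ`. -/
theorem stmt8 (N : ℕ) (hN : 3 ≤ N) (τ : Fin N → ℝ) (hmono : StrictMono τ)
    (h0 : τ ⟨0, by omega⟩ = -1) (h1 : τ ⟨N - 1, by omega⟩ = 1) (w : Fin N → ℝ) (hw : ∀ i, 0 < w i) (hquad : IsQuadrature τ w) :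
    ∀ r : Fin (N - 1) → ℝ, ∀ k : Fin N, 0 < (k : ℕ) → (k : ℕ) < N - 1 →
      (derivative (lamP τ w r)).eval (τ k) = - r ⟨(k : ℕ) - 1, by have := k.isLt; omega⟩ := by
  intro r k hk0 hk1
  have hτ := hmono.injective
  have hk₀ : k ≠ ⟨0, by omega⟩ := Fin.ne_of_val_ne hk0.ne'
  have hk₁ : k ≠ ⟨N - 1, by omega⟩ := Fin.ne_of_val_ne hk1.ne
  have hlam : (lamP τ w r).derivative.eval (τ k)
      = matAdag τ w *ᵥ r ⬝ᵥ fun i => (lagL τ i).derivative.eval (τ k) := by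
    simp [lamP, dotProduct, eval_finsetSum]
  have hsymm : (fun i => (w i)⁻¹ * (lagL τ i).derivative.eval (τ k))
      = -(w k)⁻¹ • fun i => (lagL τ k).derivative.eval (τ i) := by
    ext i
    rw [Pi.smul_apply, smul_eq_mul]
    have := hquad.mul_eval_derivative_lagL_antisymm hτ h0 h1 hk₀ hk₁ i
    field_simp [(hw i).ne', (hw k).ne']
    linear_combination this
  rw [hlam, matAdag_mulVec_dotProduct, hsymm]
  simp only [Matrix.mulVec_smul, Pi.smul_apply, smul_eq_mul,
    matA_mulVec_eval_derivative hτ ((natDegree_lagL hτ k).trans_le (N.sub_le 1)), ← h0,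
    lagL_eval hτ k]
  have hshift (j : Fin (N - 1)) : k = ⟨j + 1, by omega⟩ ↔ ⟨k - 1, by omega⟩ = j := by
    simp only [Fin.ext_iff]
    omega
  have hk : (⟨k - 1 + 1, by omega⟩ : Fin N) = k := Fin.ext (by simp only; omega)
  simp only [hshift, if_neg hk₀, sub_zero, mul_ite, mul_one, mul_zero, Finset.sum_ite_eq,
    Finset.mem_univ, if_true, hk]
  field_simp [(hw k).ne']
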